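/- arXiv:2202.05186 — 6 statements merged into one kernel-verified Lean document; each statement's English description precedes it below -/
import Mathlib

section
/- Let n ≥ 2 and let m : Fin t → ℕ. Suppose ξ* is an integer point of ℝ^{(n−1)t} such that ξ* + c ∈ Γ(v,m) for every c ∈ {0,1}^{(n−1)t}. Then there exists c* ∈ {0,1}^{(n−1)t} such that ξ* + c* ∈ Γ(v,m) and, for every type a, n divides m a − ∑_{k=1}^{n−1} k·(ξ*_{k,a} + c*_{k,a}); that is, x_{n,a}(ξ*+c*) := (m a − ∑_{k=1}^{n−1} k·(ξ*+c*)_{k,a})/n is an integer for all a. -/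
/-! Shifting `ξ*` by a 0/1 vector `c` in the column of type `a` changes
`m a - ∑ k k·ξ_{k,a}` by `-∑ k k·c_{k,a}`, and every residue `r ∈ {0, …, n-1}` is such a sum:
take `c = 0` for `r = 0` and the indicator of `k = r` otherwise. The cube hypothesis puts
every shifted point in `Γ(v, m)`. -/

/-- The feasible region `Γ(v, m)` of the reformulated LP: points
`ξ = (ξ_{k,a})`, `k ∈ {1,…,n−1}` (represented by `Fin (n-1)`, with `k : Fin (n-1)`
standing for the paper's index `k+1`), satisfying the EF constraints and the
positivity constraints with parameter `m`. -/
def Gamma (n t : ℕ) (v : Fin n → Fin t → ℝ) (m : Fin t → ℝ) :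
    Set (Fin (n - 1) → Fin t → ℝ) :=
  {ξ |
    (∀ i j : Fin n, i < j →
      0 ≤ (∑ a, v i a * ∑ k, (if i.val ≤ k.val ∧ k.val < j.val then ξ k a else 0)) ∧
      (∑ a, v j a * ∑ k, (if i.val ≤ k.val ∧ k.val < j.val then ξ k a else 0)) ≤ 0) ∧
    (∀ (i : Fin n) (a : Fin t),
      0 ≤ m a - (∑ k, (if k.val < i.val then ((k.val : ℝ) + 1) * ξ k a else 0))
          + ∑ k, (if i.val ≤ k.val then ((n : ℝ) - (k.val : ℝ) - 1) * ξ k a else 0))}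

lemma exists_zeroOne_sum_succ_mul_eq {n : ℕ} {r : ℤ} (hr₀ : 0 ≤ r) (hrn : r < n) :
    ∃ c : Fin (n - 1) → ℕ, (∀ k, c k ≤ 1) ∧ ∑ k, ((k.val : ℤ) + 1) * c k = r := by
  rcases hr₀.eq_or_lt with rfl | hr_pos
  · exact ⟨0, fun _ => zero_le_one, by simp⟩
  · refine ⟨Pi.single ⟨r.toNat - 1, by omega⟩ 1, fun k => ?_, ?_⟩
    · rcases eq_or_ne k ⟨r.toNat - 1, by omega⟩ with rfl | hk <;> simp [*]
    · simp only [Pi.single_apply, Nat.cast_ite, Nat.cast_one, Nat.cast_zero, mul_ite, mul_one,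
        mul_zero, Finset.sum_ite_eq', Finset.mem_univ, if_true]
      omega

theorem stmt_1_general (n t : ℕ) (hn : 2 ≤ n) (v : Fin n → Fin t → ℝ)
    (m : Fin t → ℕ) (ξstar : Fin (n - 1) → Fin t → ℤ)
    (hcube : ∀ c : Fin (n - 1) → Fin t → ℕ, (∀ k a, c k a ≤ 1) →
      (fun k a => (ξstar k a : ℝ) + (c k a : ℝ)) ∈ Gamma n t v (fun a => (m a : ℝ))) :
    ∃ cstar : Fin (n - 1) → Fin t → ℕ, (∀ k a, cstar k a ≤ 1) ∧
      (fun k a => (ξstar k a : ℝ) + (cstar k a : ℝ)) ∈ Gamma n t v (fun a => (m a : ℝ)) ∧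
      ∀ a : Fin t, (n : ℤ) ∣ (m a : ℤ) -
        ∑ k, ((k.val : ℤ) + 1) * (ξstar k a + (cstar k a : ℤ)) := by
  set S : Fin t → ℤ := fun a => (m a : ℤ) - ∑ k, ((k.val : ℤ) + 1) * ξstar k a
  have hn₀ : (0 : ℤ) < n := by omega
  choose c hc_le hc_sum using fun a =>
    exists_zeroOne_sum_succ_mul_eq (Int.emod_nonneg (S a) hn₀.ne') (Int.emod_lt_of_pos (S a) hn₀)
  refine ⟨fun k a => c a k, fun k a => hc_le a k, hcube _ fun k a => hc_le a k, fun a => ?_⟩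
  have hshift : (m a : ℤ) - ∑ k, ((k.val : ℤ) + 1) * (ξstar k a + (c a k : ℤ)) =
      S a - S a % n := by
    simp only [S, mul_add, Finset.sum_add_distrib, hc_sum]
    ring
  rw [hshift]
  exact Int.dvd_self_sub_of_emod_eq rfl

theorem stmt_1 (n t : ℕ) (hn : 2 ≤ n) (v : Fin n → Fin t → ℝ)
    (hnonneg : ∀ i a, 0 ≤ v i a) (hpos : ∀ i, ∃ a, 0 < v i a)
    (m : Fin t → ℕ) (ξstar : Fin (n - 1) → Fin t → ℤ)
    (hcube : ∀ c : Fin (n - 1) → Fin t → ℕ, (∀ k a, c k a ≤ 1) →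
      (fun k a => (ξstar k a : ℝ) + (c k a : ℝ)) ∈ Gamma n t v (fun a => (m a : ℝ))) :
    ∃ cstar : Fin (n - 1) → Fin t → ℕ, (∀ k a, cstar k a ≤ 1) ∧
      (fun k a => (ξstar k a : ℝ) + (cstar k a : ℝ)) ∈ Gamma n t v (fun a => (m a : ℝ)) ∧
      ∀ a : Fin t, (n : ℤ) ∣ (m a : ℤ) -
        ∑ k, ((k.val : ℤ) + 1) * (ξstar k a + (cstar k a : ℤ)) :=
  stmt_1_general n t hn v m ξstar hcube
end

section
/- Let n ≥ 2 and t ≥ 2, and let the n agents' additive valuations (nonnegative, each agent valuing some type positively) be pairwise distinct. Then for every m ∈ ℝ^t with m_a > 0 for all a, the set Γ(v,m) ⊆ ℝ^{(n−1)t} has positive ((n−1)t)-dimensional Lebesgue measure. -/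
/-- Agent `i`'s additive value for the bundle `x`. -/
def value {n t : ℕ} (v : Fin n → Fin t → ℝ) (i : Fin n) (x : Fin t → ℕ) : ℝ :=
  ∑ a, v i a * (x a : ℝ)

/-- Valuations of agents `i` and `j` are identical. -/
def Identical {n t : ℕ} (v : Fin n → Fin t → ℝ) (i j : Fin n) : Prop :=
  ∀ x y : Fin t → ℕ, (value v i x ≥ value v i y ↔ value v j x ≥ value v j y)

/-!
Γ(v, m) is cut out by homogeneous linear envy-freeness constraints and by positivity constraints
that hold strictly at `ξ = 0` because `m > 0`. So it suffices to find one `ξ` satisfying the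
envy-freeness constraints strictly: a small positive multiple of it then satisfies every
constraint strictly, and Γ(v, m) contains a neighbourhood of it. Such a `ξ` is obtained by
telescoping between the unit vectors `Bᵢ = vᵢ / ‖vᵢ‖`: since distinct valuations are not
proportional, the equality case of Cauchy–Schwarz gives `vᵢ · Bⱼ < vᵢ · Bᵢ` for `i ≠ j`.
-/

open Finset Filter Topology MeasureTheory
open scoped InnerProductSpace

attribute [local fun_prop] continuous_if_const

theorem Fin.sum_ite_Ico_sub {M : Type*} [AddCommGroup M] (f : ℕ → M) {N i j : ℕ}
    (hij : i ≤ j) (hjN : j ≤ N) :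
    ∑ k : Fin N, (if i ≤ k.val ∧ k.val < j then f k - f (k + 1) else 0) = f i - f j := by
  rw [Fin.sum_univ_eq_sum_range (fun k => if i ≤ k ∧ k < j then f k - f (k + 1) else 0),
    ← sum_filter]
  have hIco : (range N).filter (fun k => i ≤ k ∧ k < j) = Ico i j := by
    ext k
    simp only [mem_filter, mem_range, mem_Ico]
    omega
  rw [hIco, ← neg_sub, ← sum_Ico_sub f hij, ← sum_neg_distrib]
  simp only [neg_sub]

theorem real_inner_smul_inv_norm_lt_norm {F : Type*} [NormedAddCommGroup F]
    [InnerProductSpace ℝ F] {x y : F} (hy : y ≠ 0) (h : ‖y‖ • x ≠ ‖x‖ • y) :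
    ⟪x, ‖y‖⁻¹ • y⟫_ℝ < ‖x‖ := by
  rw [real_inner_smul_right, inv_mul_lt_iff₀ (norm_pos_iff.2 hy), mul_comm]
  exact inner_lt_norm_mul_iff_real.2 h

section Valuations

variable {n t : ℕ} {v : Fin n → Fin t → ℝ}

theorem identical_of_eq_smul {i j : Fin n} {c : ℝ} (hc : 0 < c) (h : v j = c • v i) :
    Identical v i j := by
  have hvalue : ∀ x, value v j x = c * value v i x := fun x => by
    simp only [value, h, Pi.smul_apply, smul_eq_mul, mul_sum, mul_assoc]
  intro x y
  rw [ge_iff_le, ge_iff_le, hvalue, hvalue, mul_le_mul_iff_right₀ hc]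

theorem exists_strictlyEnvyFree_points (hpos : ∀ i, ∃ a, 0 < v i a)
    (hdistinct : ∀ i j : Fin n, i ≠ j → ¬Identical v i j) :
    ∃ B : Fin n → Fin t → ℝ, ∀ i j, i ≠ j → ∑ a, v i a * B j a < ∑ a, v i a * B i a := by
  let w : Fin n → EuclideanSpace ℝ (Fin t) := fun i => WithLp.toLp 2 (v i)
  have hw : ∀ i, w i ≠ 0 := fun i h => by
    obtain ⟨a, ha⟩ := hpos i
    have : v i a = 0 := congrArg (fun x : EuclideanSpace ℝ (Fin t) => x a) h
    exact ha.ne' this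
  have hdot : ∀ i (y : EuclideanSpace ℝ (Fin t)), ∑ a, v i a * y a = ⟪w i, y⟫_ℝ := fun i y => by
    simp [w, PiLp.inner_apply, mul_comm]
  refine ⟨fun i => (‖w i‖⁻¹ • w i).ofLp, fun i j hij => ?_⟩
  have hself : ⟪w i, ‖w i‖⁻¹ • w i⟫_ℝ = ‖w i‖ := by
    rw [real_inner_smul_right, real_inner_self_eq_norm_sq, pow_two,
      inv_mul_cancel_left₀ (norm_ne_zero_iff.2 (hw i))]
  rw [hdot, hdot, hself]
  refine real_inner_smul_inv_norm_lt_norm (hw j) fun h => hdistinct i j hij ?_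
  refine identical_of_eq_smul (c := ‖w j‖ / ‖w i‖) (by positivity [hw i, hw j]) ?_
  ext a
  have := congrArg (fun x : EuclideanSpace ℝ (Fin t) => x a) h
  simp only [w, PiLp.smul_apply, smul_eq_mul] at this
  simp only [Pi.smul_apply, smul_eq_mul]
  field_simp [norm_ne_zero_iff.2 (hw i)]
  linarith

end Valuations

section Gamma

variable {n t : ℕ} {v : Fin n → Fin t → ℝ} {m : Fin t → ℝ}

/-- The paper's `∑_{k=i}^{j-1} ξ_{k,a}`, with the index shift of `Gamma`. -/
def blockSum {N : ℕ} (ξ : Fin N → Fin t → ℝ) (i j : ℕ) (a : Fin t) : ℝ :=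
  ∑ k, if i ≤ k.val ∧ k.val < j then ξ k a else 0

/-- Agent `i`'s amount of type `a`, up to scaling, in the allocation described by `ξ`. -/
def share (n : ℕ) (m : Fin t → ℝ) (ξ : Fin (n - 1) → Fin t → ℝ) (i : ℕ) (a : Fin t) : ℝ :=
  m a - (∑ k, if k.val < i then ((k.val : ℝ) + 1) * ξ k a else 0)
    + ∑ k, if i ≤ k.val then ((n : ℝ) - (k.val : ℝ) - 1) * ξ k a else 0

theorem mem_gamma_iff {ξ : Fin (n - 1) → Fin t → ℝ} :
    ξ ∈ Gamma n t v m ↔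
      (∀ i j : Fin n, i < j →
        0 ≤ ∑ a, v i a * blockSum ξ i j a ∧ ∑ a, v j a * blockSum ξ i j a ≤ 0) ∧
      ∀ (i : Fin n) a, 0 ≤ share n m ξ i a :=
  Iff.rfl

theorem blockSum_smul {N : ℕ} (s : ℝ) (ξ : Fin N → Fin t → ℝ) (i j : ℕ) (a : Fin t) :
    blockSum (s • ξ) i j a = s * blockSum ξ i j a := by
  simp only [blockSum, Pi.smul_apply, smul_eq_mul, mul_sum, mul_ite, mul_zero]

theorem blockSum_sub_succ {N : ℕ} (q : ℕ → Fin t → ℝ) {i j : ℕ} (hij : i ≤ j) (hjN : j ≤ N)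
    (a : Fin t) :
    blockSum (N := N) (fun k => q k - q (k + 1)) i j a = q i a - q j a :=
  Fin.sum_ite_Ico_sub (fun k => q k a) hij hjN

def StrictlyEnvyFree (v : Fin n → Fin t → ℝ) (ξ : Fin (n - 1) → Fin t → ℝ) : Prop :=
  ∀ i j : Fin n, i < j → 0 < ∑ a, v i a * blockSum ξ i j a ∧ ∑ a, v j a * blockSum ξ i j a < 0

theorem StrictlyEnvyFree.smul {ξ : Fin (n - 1) → Fin t → ℝ} (h : StrictlyEnvyFree v ξ) {s : ℝ}
    (hs : 0 < s) : StrictlyEnvyFree v (s • ξ) := fun i j hij => by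
  simp only [blockSum_smul, mul_left_comm _ s, ← mul_sum]
  exact ⟨mul_pos hs (h i j hij).1, mul_neg_of_pos_of_neg hs (h i j hij).2⟩

theorem exists_strictlyEnvyFree_of_points (B : Fin n → Fin t → ℝ)
    (hB : ∀ i j, i ≠ j → ∑ a, v i a * B j a < ∑ a, v i a * B i a) :
    ∃ ξ, StrictlyEnvyFree v ξ := by
  let q : ℕ → Fin t → ℝ := fun k => if h : k < n then B ⟨k, h⟩ else 0
  refine ⟨fun k => q k - q (k + 1), fun i j hij => ?_⟩
  have hblock : ∀ a, blockSum (fun k : Fin (n - 1) => q k - q (k + 1)) i j a = B i a - B j a := by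
    intro a
    rw [blockSum_sub_succ q hij.le (by omega)]
    simp only [q, dif_pos i.isLt, dif_pos j.isLt]
  simp only [hblock, mul_sub, sum_sub_distrib, sub_pos, sub_neg]
  exact ⟨hB i j hij.ne, hB j i hij.ne'⟩

theorem gamma_mem_nhds {ξ : Fin (n - 1) → Fin t → ℝ} (hef : StrictlyEnvyFree v ξ)
    (hshare : ∀ (i : Fin n) a, 0 < share n m ξ i a) : Gamma n t v m ∈ 𝓝 ξ := by
  have hcont_ef : ∀ l (i j : ℕ), Continuous fun ξ : Fin (n - 1) → Fin t → ℝ =>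
      ∑ a, v l a * blockSum ξ i j a := by
    unfold blockSum; fun_prop
  have hcont_share : ∀ (i : ℕ) a, Continuous fun ξ => share n m ξ i a := by
    unfold share; fun_prop
  simp only [← eventually_mem_set, mem_gamma_iff]
  refine (eventually_all.2 fun i => eventually_all.2 fun j =>
    eventually_imp_distrib_left.2 fun hij => ?_).and
    (eventually_all.2 fun i => eventually_all.2 fun a => ?_)
  · exact (((hcont_ef i i j).tendsto ξ).eventually_const_lt (hef i j hij).1).and
      (((hcont_ef j i j).tendsto ξ).eventually_lt_const (hef i j hij).2) |>.mono
      fun _ h => ⟨h.1.le, h.2.le⟩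
  · exact ((hcont_share i a).tendsto ξ).eventually_const_lt (hshare i a) |>.mono fun _ h => h.le

theorem eventually_share_smul_pos (hm : ∀ a, 0 < m a) (ξ : Fin (n - 1) → Fin t → ℝ) :
    ∀ᶠ s in 𝓝 (0 : ℝ), ∀ (i : Fin n) a, 0 < share n m (s • ξ) i a := by
  refine eventually_all.2 fun i => eventually_all.2 fun a => ?_
  have hcont : Continuous fun s : ℝ => share n m (s • ξ) i a := by
    unfold share; fun_prop
  have hzero : share n m ((0 : ℝ) • ξ) i a = m a := by
    simp [share]
  exact (hcont.tendsto 0).eventually_const_lt (hzero ▸ hm a)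

end Gamma

theorem stmt_2_general (n t : ℕ) (v : Fin n → Fin t → ℝ)
    (hpos : ∀ i, ∃ a, 0 < v i a)
    (hdistinct : ∀ i j : Fin n, i ≠ j → ¬ Identical v i j)
    (m : Fin t → ℝ) (hm : ∀ a, 0 < m a) :
    0 < MeasureTheory.volume (Gamma n t v m) := by
  obtain ⟨B, hB⟩ := exists_strictlyEnvyFree_points hpos hdistinct
  obtain ⟨ξ, hξ⟩ := exists_strictlyEnvyFree_of_points B hB
  obtain ⟨s, hshare, hs⟩ :=
    ((eventually_share_smul_pos hm ξ).filter_mono nhdsWithin_le_nhds |>.and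
      (self_mem_nhdsWithin : Set.Ioi (0 : ℝ) ∈ 𝓝[>] 0)).exists
  exact Measure.measure_pos_of_mem_nhds _ (gamma_mem_nhds (hξ.smul hs) hshare)

theorem stmt_2 (n t : ℕ) (hn : 2 ≤ n) (ht : 2 ≤ t) (v : Fin n → Fin t → ℝ)
    (hnonneg : ∀ i a, 0 ≤ v i a) (hpos : ∀ i, ∃ a, 0 < v i a)
    (hdistinct : ∀ i j : Fin n, i ≠ j → ¬ Identical v i j)
    (m : Fin t → ℝ) (hm : ∀ a, 0 < m a) :
    0 < MeasureTheory.volume (Gamma n t v m) :=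
  stmt_2_general n t v hpos hdistinct m hm
end

section
/- Let t = 2 and suppose the agents are partitioned into three pairwise disjoint sets N1+, N1−, N2 with N1+ ∪ N1− ∪ N2 = Fin n such that: (a) every i ∈ N1+ ∪ N1− satisfies v i 1 > v i 2; (b) every j ∈ N2 satisfies v j 2 ≥ v j 1; (c) for every i ∈ N1+ and every j ∉ N1+, v i 1 · v j 2 ≥ v j 1 · v i 2 (agents in N1+ most prefer type 1 relative to type 2). Let p ≥ 0 and q ≥ 1 be integers and let X be the allocation with X i = (p+1, 0) for i ∈ N1+, X i = (p, q) for i ∈ N1−, and X i = (0, p+q) for i ∈ N2. If some agent i ∈ N1+ envies some agent k ∉ N1+ (i.e., V_i(X i) < V_i(X k)), then no agent in N1− ∪ N2 envies any agent in N1+: V_j(X j) ≥ V_j(X i) for all j ∉ N1+ and all i ∈ N1+. -/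
theorem stmt_9 (n : ℕ) (v : Fin n → Fin 2 → ℝ)
    (hnonneg : ∀ i a, 0 ≤ v i a) (hpos : ∀ i, ∃ a, 0 < v i a)
    (N1p N1m N2 : Finset (Fin n))
    (hd12 : Disjoint N1p N1m) (hd13 : Disjoint N1p N2) (hd23 : Disjoint N1m N2)
    (hunion : N1p ∪ N1m ∪ N2 = Finset.univ)
    (ha : ∀ i ∈ N1p ∪ N1m, v i 0 > v i 1)
    (hb : ∀ j ∈ N2, v j 1 ≥ v j 0)
    (hc : ∀ i ∈ N1p, ∀ j ∉ N1p, v i 0 * v j 1 ≥ v j 0 * v i 1)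
    (p q : ℕ) (hq : 1 ≤ q)
    (X : Fin n → Fin 2 → ℕ)
    (hX1 : ∀ i ∈ N1p, X i = ![p + 1, 0])
    (hX2 : ∀ i ∈ N1m, X i = ![p, q])
    (hX3 : ∀ i ∈ N2, X i = ![0, p + q])
    (henvy : ∃ i ∈ N1p, ∃ k ∉ N1p, value v i (X i) < value v i (X k)) :
    ∀ j ∉ N1p, ∀ i ∈ N1p, value v j (X j) ≥ value v j (X i) := by
  obtain ⟨i, hi, k, hk, hik⟩ := henvy
  have hmem : ∀ m : Fin n, m ∉ N1p → m ∈ N1m ∪ N2 := by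
    intro m hm
    have := Finset.mem_univ m
    rw [← hunion, Finset.union_assoc, Finset.mem_union] at this
    tauto
  have hi1 : v i 0 > v i 1 := ha i (Finset.mem_union_left _ hi)
  have hi1p : 0 ≤ v i 1 := hnonneg i 1
  have hq1 : (1 : ℝ) ≤ (q : ℝ) := by exact_mod_cast hq
  have hvXi : value v i (X i) = v i 0 * (p + 1) := by
    rw [hX1 i hi]; simp [value, Fin.sum_univ_two]
  have key : v i 0 < q * v i 1 := by
    rcases Finset.mem_union.mp (hmem k hk) with h | h
    · rw [hvXi, hX2 k h] at hik
      simp [value, Fin.sum_univ_two] at hik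
      nlinarith
    · rw [hvXi, hX3 k h] at hik
      simp [value, Fin.sum_univ_two] at hik
      push_cast at hik
      nlinarith
  have hi1pos : 0 < v i 1 := by nlinarith
  intro j hj i' hi'
  have hcij := hc i hi j hj
  have hj0 : 0 ≤ v j 0 := hnonneg j 0
  have hj1 : 0 ≤ v j 1 := hnonneg j 1
  have hjq : v j 0 ≤ q * v j 1 := by nlinarith
  have hvXi' : value v j (X i') = v j 0 * (p + 1) := by
    rw [hX1 i' hi']; simp [value, Fin.sum_univ_two]
  rw [hvXi']
  rcases Finset.mem_union.mp (hmem j hj) with h | h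
  · rw [hX2 j h]
    simp only [value, Fin.sum_univ_two, Matrix.cons_val_zero, Matrix.cons_val_one, Matrix.head_cons]
    nlinarith
  · rw [hX3 j h]
    have hbj := hb j h
    simp only [value, Fin.sum_univ_two, Matrix.cons_val_zero, Matrix.cons_val_one, Matrix.head_cons]
    push_cast
    nlinarith [mul_nonneg hj1 (Nat.cast_nonneg (α := ℝ) p)]
end

section
/- Let t = 2 and let X : Fin n → Fin 2 → ℕ be an EFX allocation whose envy graph is acyclic. Fix a type a ∈ {1, 2} and assume that for every agent i, the allocation obtained from X by adding one item of type a to X i is not EFX. Let s be a source of the envy graph with the least x_a-axis intercept among all sources, i.e., for every source s', V_s(X s) · v s' a ≤ V_{s'}(X s') · v s a. Then there exists an agent r that is reachable from s in the envy graph and is a most envious agent of the bundle X s + e_a. -/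
set_option linter.unnecessarySeqFocus false
set_option maxHeartbeats 1000000

def IsEFX {n t : ℕ} (v : Fin n → Fin t → ℝ) (X : Fin n → Fin t → ℕ) : Prop :=
  ∀ i j : Fin n, i ≠ j → ∀ a : Fin t, 1 ≤ X j a →
    value v i (X i) ≥ value v i (X j) - v i a

def Envies {n t : ℕ} (v : Fin n → Fin t → ℝ) (X : Fin n → Fin t → ℕ) (i j : Fin n) : Prop :=
  value v i (X i) < value v i (X j)

def IsMEA {n t : ℕ} (v : Fin n → Fin t → ℝ) (X : Fin n → Fin t → ℕ)
    (r : Fin n) (Y : Fin t → ℕ) : Prop :=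
  ∃ z : Fin t → ℕ, (∀ a, z a ≤ Y a) ∧ z ≠ Y ∧ value v r (X r) < value v r z ∧
    ∀ (j : Fin n) (y : Fin t → ℕ), (∀ a, y a ≤ z a) → y ≠ z → value v j (X j) ≥ value v j y

lemma value_pair {n : ℕ} (v : Fin n → Fin 2 → ℝ) (i : Fin n) (a : Fin 2) (y : Fin 2 → ℕ) :
    value v i y = v i a * (y a : ℝ) + v i (a + 1) * (y (a + 1) : ℝ) := by
  fin_cases a <;> simp [value, Fin.sum_univ_two] <;> ring

lemma two_elim (a c : Fin 2) : c = a ∨ c = a + 1 := by revert a c; decide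

lemma add_one_ne (a : Fin 2) : a + 1 ≠ a := by revert a; decide

lemma value_mono {n : ℕ} (v : Fin n → Fin 2 → ℝ) (hnonneg : ∀ i a, 0 ≤ v i a) (i : Fin n)
    {x y : Fin 2 → ℕ} (h : ∀ c, x c ≤ y c) : value v i x ≤ value v i y :=
  Finset.sum_le_sum fun c _ => mul_le_mul_of_nonneg_left (by exact_mod_cast h c) (hnonneg i c)

theorem stmt_10 (n : ℕ) (v : Fin n → Fin 2 → ℝ)
    (hnonneg : ∀ i a, 0 ≤ v i a) (hpos : ∀ i, ∃ a, 0 < v i a)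
    (X : Fin n → Fin 2 → ℕ) (hEFX : IsEFX v X)
    (hacyclic : ∀ i : Fin n, ¬ Relation.TransGen (Envies v X) i i)
    (a : Fin 2)
    (hnogive : ∀ i : Fin n,
      ¬ IsEFX v (Function.update X i (fun b => X i b + if b = a then 1 else 0)))
    (s : Fin n) (hsource : ∀ i : Fin n, ¬ Envies v X i s)
    (hleast : ∀ s' : Fin n, (∀ i : Fin n, ¬ Envies v X i s') →
      value v s (X s) * v s' a ≤ value v s' (X s') * v s a) :
    ∃ r : Fin n, Relation.ReflTransGen (Envies v X) s r ∧
      IsMEA v X r (fun b => X s b + if b = a then 1 else 0) := by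
  classical
  set a' : Fin 2 := a + 1 with ha'def
  have ha' : a' ≠ a := add_one_ne a
  set A : ℕ := X s a with hAdef
  set B : ℕ := X s a' with hBdef
  -- the predicate: some agent envies the bundle (A+1 items of a, w items of a')
  set Q : ℕ → Prop := fun w => ∃ i : Fin n, value v i (X i) < v i a * ((A : ℝ) + 1) + v i a' * (w : ℝ)
    with hQdef
  -- Step 0: B ≥ 1 and Q (B-1)
  have step0 : 1 ≤ B ∧ Q (B - 1) := by
    have hne := hnogive s
    rw [IsEFX] at hne
    push_neg at hne
    obtain ⟨i, j, hij, c, hc1, hc2⟩ := hne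
    by_cases hj : j = s
    · rw [hj] at hc1 hc2
      have his : i ≠ s := by rw [← hj]; exact hij
      simp only [Function.update_self, Function.update_of_ne his] at hc1 hc2
      have hYval : value v i (fun b => X s b + if b = a then 1 else 0)
          = v i a * ((A : ℝ) + 1) + v i a' * (B : ℝ) := by
        rw [value_pair v i a]
        simp only [← ha'def, if_pos rfl, if_neg ha', ← hAdef, ← hBdef]
        push_cast
        ring
      have hXsval : value v i (X s) = v i a * (A : ℝ) + v i a' * (B : ℝ) := by
        rw [value_pair v i a]
      have hsrc : ¬ (value v i (X i) < value v i (X s)) := hsource i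
      push_neg at hsrc
      rcases two_elim a c with hc | hc
      · exfalso
        rw [hc, hYval] at hc2
        rw [hXsval] at hsrc
        linarith [hnonneg i a]
      · rw [hc, ← ha'def] at hc1 hc2
        rw [if_neg ha', ← hBdef] at hc1
        have hB1 : 1 ≤ B := by omega
        refine ⟨hB1, i, ?_⟩
        rw [hYval] at hc2
        have hcast : ((B - 1 : ℕ) : ℝ) = (B : ℝ) - 1 := by
          push_cast [Nat.cast_sub hB1]; ring
        rw [hcast]
        linarith [hc2]
    · exfalso
      have hXj : Function.update X s (fun b => X s b + if b = a then 1 else 0) j = X j :=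
        Function.update_of_ne hj _ _
      rw [hXj] at hc1 hc2
      by_cases hi : i = s
      · subst hi
        have hXi : Function.update X i (fun b => X i b + if b = a then 1 else 0) i
            = (fun b => X i b + if b = a then 1 else 0) := Function.update_self _ _ _
        rw [hXi] at hc2
        have hY : value v i (fun b => X i b + if b = a then 1 else 0)
            = value v i (X i) + v i a := by
          rw [value_pair v i a, value_pair v i a (X i)]
          simp [if_neg ha']
          push_cast
          ring
        rw [hY] at hc2
        have := hEFX i j (by exact fun h => hj h.symm) c hc1
        linarith [hnonneg i a]
      · have hXi : Function.update X s (fun b => X s b + if b = a then 1 else 0) i = X i :=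
          Function.update_of_ne hi _ _
        rw [hXi] at hc2
        have := hEFX i j hij c hc1
        linarith
  obtain ⟨hB, hQB⟩ := step0
  have hQex : ∃ w, Q w := ⟨B - 1, hQB⟩
  set w : ℕ := Nat.find hQex with hwdef
  have hwle : w ≤ B - 1 := Nat.find_min' hQex hQB
  have hwB : w < B := lt_of_le_of_lt hwle (by omega)
  have hQw : Q w := Nat.find_spec hQex
  set z : Fin 2 → ℕ := fun c => if c = a then A + 1 else w with hzdef
  have hza : z a = A + 1 := by simp [hzdef]
  have hza' : z a' = w := by simp [hzdef, ha']
  have hvz : ∀ i, value v i z = v i a * ((A : ℝ) + 1) + v i a' * (w : ℝ) := by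
    intro i
    rw [value_pair v i a, ← ha'def, hza, hza']
    push_cast
    ring
  have hvXs : ∀ i, value v i (X s) = v i a * (A : ℝ) + v i a' * (B : ℝ) := by
    intro i
    rw [value_pair v i a, ← ha'def, ← hAdef, ← hBdef]
  -- z is a proper sub-bundle of Y
  have hzle : ∀ c, z c ≤ X s c + if c = a then 1 else 0 := by
    intro c
    rcases two_elim a c with rfl | rfl
    · simp [hza, hAdef]
    · rw [← ha'def]
      simp [hza', ha', ← hBdef]
      omega
  have hzne : z ≠ fun b => X s b + if b = a then 1 else 0 := by
    intro h
    have := congrFun h a'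
    rw [hza'] at this
    simp [ha', ← hBdef] at this
    omega
  -- minimality of z
  have hmin : ∀ (j : Fin n) (y : Fin 2 → ℕ), (∀ c, y c ≤ z c) → y ≠ z →
      value v j (X j) ≥ value v j y := by
    intro j y hy hne
    have hya : y a ≤ A + 1 := by rw [← hza]; exact hy a
    have hya' : y a' ≤ w := by rw [← hza']; exact hy a'
    rcases Nat.lt_or_ge (y a) (A + 1) with h | h
    · have hyle : ∀ c, y c ≤ X s c := by
        intro c
        rcases two_elim a c with rfl | rfl
        · omega
        · rw [← ha'def, ← hBdef]; omega
      have h1 := value_mono v hnonneg j hyle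
      have h2 : ¬ (value v j (X j) < value v j (X s)) := hsource j
      push_neg at h2
      linarith
    · have hya2 : y a = A + 1 := le_antisymm hya h
      have hq : y a' < w := by
        rcases Nat.lt_or_ge (y a') w with h' | h'
        · exact h'
        · exfalso
          apply hne
          funext c
          rcases two_elim a c with rfl | rfl
          · rw [hza, hya2]
          · rw [← ha'def, hza']; omega
      have hnq : ¬ Q (y a') := Nat.find_min hQex hq
      have hnq' : ∀ i : Fin n, ¬ (value v i (X i) < v i a * ((A : ℝ) + 1) + v i a' * ((y a' : ℕ) : ℝ)) := by
        intro i hlt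
        exact hnq ⟨i, hlt⟩
      have hval : value v j y = v j a * ((A : ℝ) + 1) + v j a' * ((y a' : ℕ) : ℝ) := by
        rw [value_pair v j a, ← ha'def, hya2]
        push_cast
        ring
      rw [ge_iff_le, hval]
      exact not_lt.mp (hnq' j)
  -- r: the envious agent of z
  have hnotenvy : ∀ i : Fin n, v i a * (A : ℝ) + v i a' * (B : ℝ) ≤ value v i (X i) := by
    intro i
    have h : ¬ (value v i (X i) < value v i (X s)) := hsource i
    push_neg at h
    rw [hvXs i] at h
    exact h
  obtain ⟨r, hr⟩ := hQw
  have hrz : value v r (X r) < value v r z := by rw [hvz r]; exact hr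
  by_cases hse : value v s (X s) < value v s z
  · exact ⟨s, Relation.ReflTransGen.refl, z, hzle, hzne, hse, hmin⟩
  · push_neg at hse
    refine ⟨r, ?_, z, hzle, hzne, hrz, hmin⟩
    by_contra hU
    have hVs : value v s (X s) = v s a * (A : ℝ) + v s a' * (B : ℝ) := hvXs s
    have hΔ : v s a + v s a' * (w : ℝ) ≤ v s a' * (B : ℝ) := by
      have h := hse
      rw [hvz s, hVs] at h
      linarith
    have hwBr : (w : ℝ) + 1 ≤ (B : ℝ) := by exact_mod_cast hwB
    have hB0 : (0 : ℝ) < (B : ℝ) := by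
      have : (1 : ℝ) ≤ (B : ℝ) := by exact_mod_cast hB
      linarith
    have hβs : 0 < v s a' := by
      rcases (hnonneg s a').lt_or_eq with h | h
      · exact h
      · exfalso
        obtain ⟨c, hc⟩ := hpos s
        rcases two_elim a c with h2 | h2
        · rw [h2] at hc
          rw [← h] at hΔ
          have hw0 : (0:ℝ) ≤ (w:ℝ) := Nat.cast_nonneg _
          nlinarith
        · rw [h2, ← ha'def, ← h] at hc
          exact lt_irrefl _ hc
    -- R1 : intercept of r is smaller than that of s
    have h1 : value v r (X r) < v r a * ((A : ℝ) + 1) + v r a' * (w : ℝ) := hr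
    have h2 : v r a * (A : ℝ) + v r a' * (B : ℝ) ≤ value v r (X r) := hnotenvy r
    have hE1 : v r a' * ((B : ℝ) - w) < v r a := by linarith
    have hra : 0 < v r a :=
      lt_of_le_of_lt (mul_nonneg (hnonneg r a') (by linarith)) hE1
    have R1 : v s a * value v r (X r) < v r a * value v s (X s) := by
      by_cases hαs : v s a = 0
      · rw [hαs, zero_mul]
        have hVspos : 0 < value v s (X s) := by
          rw [hVs, hαs]
          nlinarith [mul_pos hβs hB0]
        exact mul_pos hra hVspos
      · have hαs' : 0 < v s a := lt_of_le_of_ne (hnonneg s a) (Ne.symm hαs)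
        have step1 : v s a * value v r (X r) < v s a * (v r a * ((A : ℝ) + 1) + v r a' * (w : ℝ)) :=
          mul_lt_mul_of_pos_left h1 hαs'
        have hΔ' : v s a ≤ v s a' * ((B : ℝ) - w) := by linarith
        have hw0 : (0:ℝ) ≤ (w:ℝ) := Nat.cast_nonneg _
        have P1 : v s a * v r a ≤ v s a' * ((B : ℝ) - w) * v r a :=
          mul_le_mul_of_nonneg_right hΔ' (hnonneg r a)
        have P2 : v s a * v r a' ≤ v s a' * ((B : ℝ) - w) * v r a' :=
          mul_le_mul_of_nonneg_right hΔ' (hnonneg r a')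
        have P3 : v r a' * ((B : ℝ) - w) * v s a' ≤ v r a * v s a' :=
          mul_le_mul_of_nonneg_right hE1.le (hnonneg s a')
        have P2w : v s a * v r a' * (w : ℝ) ≤ v s a' * ((B : ℝ) - w) * v r a' * (w : ℝ) :=
          mul_le_mul_of_nonneg_right P2 hw0
        have P3w : v r a' * ((B : ℝ) - w) * v s a' * (w : ℝ) ≤ v r a * v s a' * (w : ℝ) :=
          mul_le_mul_of_nonneg_right P3 hw0
        have key : v s a * (v r a * ((A : ℝ) + 1) + v r a' * (w : ℝ))
            ≤ v r a * value v s (X s) := by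
          rw [hVs]
          nlinarith [P1, P2w, P3w]
        linarith
    -- the bad set and descent
    set P : Fin n → Prop := fun u => ¬ Relation.ReflTransGen (Envies v X) s u ∧
        v s a * value v u (X u) < v u a * value v s (X s) with hPdef
    have hstep : ∀ u : Fin n, P u → ∃ x : Fin n, Envies v X x u ∧ P x := by
      rintro u ⟨hu1, hu2⟩
      have hsnu : ¬ Envies v X s u := fun h => hu1 (Relation.ReflTransGen.single h)
      have A1 : v s a * ((X u a : ℕ) : ℝ) + v s a' * ((X u a' : ℕ) : ℝ) ≤ value v s (X s) := by
        have h : ¬ (value v s (X s) < value v s (X u)) := hsnu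
        push_neg at h
        rw [value_pair v s a (X u), ← ha'def] at h
        exact h
      have A2 : v u a * (A : ℝ) + v u a' * (B : ℝ) ≤ value v u (X u) := hnotenvy u
      have hVu : value v u (X u) = v u a * ((X u a : ℕ) : ℝ) + v u a' * ((X u a' : ℕ) : ℝ) := by
        rw [value_pair v u a (X u), ← ha'def]
      have D1 : v s a * v u a' < v u a * v s a' := by
        have t1 : v s a * (v u a * (A : ℝ) + v u a' * (B : ℝ)) ≤ v s a * value v u (X u) :=
          mul_le_mul_of_nonneg_left A2 (hnonneg s a)
        have t2 := hu2
        rw [hVs] at t2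
        have t3 : (v s a * v u a') * (B : ℝ) < (v u a * v s a') * (B : ℝ) := by nlinarith
        exact lt_of_mul_lt_mul_right t3 hB0.le
      have hex : ∃ x : Fin n, Envies v X x u := by
        by_contra hno
        push_neg at hno
        have hl := hleast u hno
        nlinarith [hl, hu2]
      obtain ⟨x, hx⟩ := hex
      have hx1 : ¬ Relation.ReflTransGen (Envies v X) s x := fun h => hu1 (h.tail hx)
      refine ⟨x, hx, hx1, ?_⟩
      by_contra hA5
      push_neg at hA5
      have A4 : v x a * (A : ℝ) + v x a' * (B : ℝ) ≤ value v x (X x) := hnotenvy x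
      have A6 : value v x (X x) < v x a * ((X u a : ℕ) : ℝ) + v x a' * ((X u a' : ℕ) : ℝ) := by
        have h : value v x (X x) < value v x (X u) := hx
        rw [value_pair v x a (X u), ← ha'def] at h
        exact h
      have hVsA1 : v s a * ((X u a : ℕ) : ℝ) + v s a' * ((X u a' : ℕ) : ℝ)
          ≤ v s a * (A : ℝ) + v s a' * (B : ℝ) := by rw [← hVs]; exact A1
      have hA2' : v u a * (A : ℝ) + v u a' * (B : ℝ)
          ≤ v u a * ((X u a : ℕ) : ℝ) + v u a' * ((X u a' : ℕ) : ℝ) := by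
        rw [← hVu]; exact A2
      have hqB : ((X u a' : ℕ) : ℝ) ≤ (B : ℝ) := by
        by_contra hq'
        push_neg at hq'
        have hd : (0 : ℝ) < ((X u a' : ℕ) : ℝ) - (B : ℝ) := by linarith
        have e1 : v s a' * (((X u a' : ℕ) : ℝ) - B) ≤ v s a * ((A : ℝ) - (X u a : ℕ)) := by
          linarith
        have e2 : v u a * ((A : ℝ) - (X u a : ℕ)) ≤ v u a' * (((X u a' : ℕ) : ℝ) - B) := by
          linarith
        have m1 : v s a * (v u a * ((A : ℝ) - (X u a : ℕ)))
            ≤ v s a * (v u a' * (((X u a' : ℕ) : ℝ) - B)) :=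
          mul_le_mul_of_nonneg_left e2 (hnonneg s a)
        have m2 : v u a * (v s a' * (((X u a' : ℕ) : ℝ) - B))
            ≤ v u a * (v s a * ((A : ℝ) - (X u a : ℕ))) :=
          mul_le_mul_of_nonneg_left e1 (hnonneg u a)
        have m3 : (v u a * v s a') * (((X u a' : ℕ) : ℝ) - B)
            ≤ (v s a * v u a') * (((X u a' : ℕ) : ℝ) - B) := by nlinarith [m1, m2]
        have := le_of_mul_le_mul_right m3 hd
        linarith [D1]
      by_cases hαx : v x a = 0
      · have hm : v x a' * ((X u a' : ℕ) : ℝ) ≤ v x a' * (B : ℝ) :=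
          mul_le_mul_of_nonneg_left hqB (hnonneg x a')
        rw [hαx] at A4 A6
        linarith
      · have hαx' : 0 < v x a := lt_of_le_of_ne (hnonneg x a) (Ne.symm hαx)
        by_cases hαs : v s a = 0
        · have hsa' : 0 < v s a' := by
            rcases (hnonneg s a').lt_or_eq with h | h
            · exact h
            · exfalso; rw [hαs, ← h] at D1; simp at D1
          have hVspos : 0 < value v s (X s) := by
            rw [hVs, hαs]
            nlinarith [mul_pos hsa' hB0]
          rw [hαs, zero_mul] at hA5
          nlinarith [hA5, mul_pos hαx' hVspos]
        · have hαs' : 0 < v s a := lt_of_le_of_ne (hnonneg s a) (Ne.symm hαs)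
          rw [hVs] at hA5
          have hq0 : (0 : ℝ) ≤ ((X u a' : ℕ) : ℝ) := Nat.cast_nonneg _
          have E1 : (v s a * ((X u a' : ℕ) : ℝ)) * (v x a * (A : ℝ) + v x a' * (B : ℝ))
              ≤ (v s a * ((X u a' : ℕ) : ℝ)) * value v x (X x) :=
            mul_le_mul_of_nonneg_left A4 (mul_nonneg hαs'.le hq0)
          have E2 : ((B : ℝ) - ((X u a' : ℕ) : ℝ)) * (v x a * (v s a * (A : ℝ) + v s a' * (B : ℝ)))
              ≤ ((B : ℝ) - ((X u a' : ℕ) : ℝ)) * (v s a * value v x (X x)) :=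
            mul_le_mul_of_nonneg_left hA5 (by linarith)
          have E3 : (v x a * (B : ℝ)) * (v s a * ((X u a : ℕ) : ℝ) + v s a' * ((X u a' : ℕ) : ℝ))
              ≤ (v x a * (B : ℝ)) * (v s a * (A : ℝ) + v s a' * (B : ℝ)) :=
            mul_le_mul_of_nonneg_left hVsA1 (mul_nonneg hαx'.le hB0.le)
          have E4 : (v s a * (B : ℝ)) * value v x (X x)
              < (v s a * (B : ℝ)) * (v x a * ((X u a : ℕ) : ℝ) + v x a' * ((X u a' : ℕ) : ℝ)) :=
            mul_lt_mul_of_pos_left A6 (mul_pos hαs' hB0)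
          nlinarith [E1, E2, E3, E4]
    have hPr : P r := ⟨hU, R1⟩
    choose F hF1 hF2 using hstep
    let T := {u : Fin n // P u}
    let g : T → T := fun t => ⟨F t.1 t.2, hF2 t.1 t.2⟩
    let seq : ℕ → T := fun k => g^[k] ⟨r, hPr⟩
    have hchain : ∀ k : ℕ, Envies v X (seq (k + 1)).1 (seq k).1 := by
      intro k
      have hs : seq (k + 1) = g (seq k) := Function.iterate_succ_apply' g k _
      rw [hs]
      exact hF1 _ _
    have htrans : ∀ m k : ℕ, k < m → Relation.TransGen (Envies v X) (seq m).1 (seq k).1 := by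
      intro m
      induction m with
      | zero => intro k hk; omega
      | succ m ih =>
        intro k hk
        rcases Nat.lt_succ_iff_lt_or_eq.mp hk with h | h
        · exact Relation.TransGen.head (hchain m) (ih k h)
        · subst h
          exact Relation.TransGen.single (hchain k)
    obtain ⟨k, m, hkm, heq⟩ := Finite.exists_ne_map_eq_of_infinite seq
    rcases hkm.lt_or_gt with h | h
    · have ht := htrans m k h
      rw [heq] at ht
      exact hacyclic _ ht
    · have ht := htrans k m h
      rw [← heq] at ht
      exact hacyclic _ ht
end

section
/- In the counterexample instance with allocation X (X_A = (3,5,0), X_B = (6,3,0), X_C = (0,0,11)), for every agent s ∈ {A, B, C} there is no agent r that is reachable from s in the envy graph of X and is a most envious agent of the bundle X_s + e_2. In particular, no source of the envy graph has a reachable most envious agent with respect to the remaining type-2 item. -/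
/-- The valuations of the counterexample instance (ε = 7/100):
`v_A = (1, 2−ε, 0)`, `v_B = (1+2ε, 1+ε, 1)`, `v_C = (0, 2−ε, 1)`. -/
noncomputable def vCE : Fin 3 → Fin 3 → ℝ :=
  ![![1, 2 - 7/100, 0], ![1 + 2 * (7/100), 1 + 7/100, 1], ![0, 2 - 7/100, 1]]

/-- The allocation of the counterexample instance:
`X_A = (3,5,0)`, `X_B = (6,3,0)`, `X_C = (0,0,11)`. -/
def XCE : Fin 3 → Fin 3 → ℕ :=
  ![![3, 5, 0], ![6, 3, 0], ![0, 0, 11]]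

lemma val0 (x : Fin 3 → ℕ) : value vCE 0 x = x 0 + (2 - 7/100) * x 1 := by
  simp [value, vCE, Fin.sum_univ_three]
lemma val1 (x : Fin 3 → ℕ) :
    value vCE 1 x = (1 + 2*(7/100)) * x 0 + (1 + 7/100) * x 1 + x 2 := by
  simp [value, vCE, Fin.sum_univ_three]
lemma val2 (x : Fin 3 → ℕ) : value vCE 2 x = (2 - 7/100) * x 1 + x 2 := by
  simp [value, vCE, Fin.sum_univ_three]

lemma notEnvA (j : Fin 3) : ¬ Envies vCE XCE 0 j := by
  fin_cases j <;> simp [Envies, val0, XCE] <;> norm_num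

lemma notEnvC (j : Fin 3) : ¬ Envies vCE XCE 2 j := by
  fin_cases j <;> simp [Envies, val2, XCE] <;> norm_num

lemma envBonly (j : Fin 3) (h : Envies vCE XCE 1 j) : j = 2 := by
  fin_cases j
  · exact absurd h (by simp [Envies, val1, XCE]; norm_num)
  · exact absurd h (lt_irrefl _)
  · rfl

lemma reachA (r : Fin 3) (h : Relation.ReflTransGen (Envies vCE XCE) 0 r) : r = 0 := by
  induction h with
  | refl => rfl
  | tail h1 h2 ih => subst ih; exact absurd h2 (notEnvA _)

lemma reachC (r : Fin 3) (h : Relation.ReflTransGen (Envies vCE XCE) 2 r) : r = 2 := by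
  induction h with
  | refl => rfl
  | tail h1 h2 ih => subst ih; exact absurd h2 (notEnvC _)

lemma reachB (r : Fin 3) (h : Relation.ReflTransGen (Envies vCE XCE) 1 r) :
    r = 1 ∨ r = 2 := by
  induction h with
  | refl => exact Or.inl rfl
  | tail h1 h2 ih =>
    rcases ih with h | h
    · subst h; exact Or.inr (envBonly _ h2)
    · subst h; exact absurd h2 (notEnvC _)

lemma notMEA_A : ¬ IsMEA vCE XCE 0 ![3, 6, 0] := by
  rintro ⟨z, hz, hne, hlt, hmin⟩
  have h0 : z 0 ≤ 3 := by simpa using hz 0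
  have h1 : z 1 ≤ 6 := by simpa using hz 1
  have h2 : z 2 = 0 := by simpa using hz 2
  rw [val0, val0] at hlt
  simp [XCE] at hlt
  rcases Nat.eq_zero_or_pos (z 0) with hz0 | hz0
  · have c1 : ((z 1 : ℝ)) ≤ 6 := by exact_mod_cast h1
    rw [hz0] at hlt
    push_cast at hlt
    linarith
  · have hy := hmin 2 ![0, z 1, 0] (by
        intro a; fin_cases a <;> simp [h2.ge])
      (by
        intro hcon
        have : (0 : ℕ) = z 0 := congrFun hcon 0
        omega)
    rw [val2, val2] at hy
    simp [XCE] at hy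
    have : (z 1 : ℝ) < 6 := by nlinarith
    have h1' : z 1 ≤ 5 := by
      have : z 1 < 6 := by exact_mod_cast this
      omega
    have c1 : ((z 1 : ℝ)) ≤ 5 := by exact_mod_cast h1'
    have c0 : ((z 0 : ℝ)) ≤ 3 := by exact_mod_cast h0
    linarith

lemma notMEA_B : ¬ IsMEA vCE XCE 1 ![6, 4, 0] := by
  rintro ⟨z, hz, hne, hlt, hmin⟩
  have h0 : z 0 ≤ 6 := by simpa using hz 0
  have h1 : z 1 ≤ 4 := by simpa using hz 1
  have h2 : z 2 = 0 := by simpa using hz 2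
  rw [val1, val1] at hlt
  simp [XCE, h2] at hlt
  have hk : z 0 ≤ 5 ∨ (z 0 = 6 ∧ z 1 ≤ 3) := by
    rcases Nat.lt_or_ge (z 0) 6 with h | h
    · exact Or.inl (by omega)
    · have he0 : z 0 = 6 := by omega
      right
      refine ⟨he0, ?_⟩
      by_contra hc
      have he1 : z 1 = 4 := by omega
      exact hne (funext fun b => by fin_cases b <;> simp [he0, he1, h2])
  rcases hk with h | ⟨he0, he1⟩
  · have c0 : ((z 0 : ℝ)) ≤ 5 := by exact_mod_cast h
    have c1 : ((z 1 : ℝ)) ≤ 4 := by exact_mod_cast h1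
    linarith
  · have c1 : ((z 1 : ℝ)) ≤ 3 := by exact_mod_cast he1
    rw [he0] at hlt
    push_cast at hlt
    linarith

lemma notMEA_C_YB : ¬ IsMEA vCE XCE 2 ![6, 4, 0] := by
  rintro ⟨z, hz, hne, hlt, hmin⟩
  have h1 : z 1 ≤ 4 := by simpa using hz 1
  have h2 : z 2 = 0 := by simpa using hz 2
  rw [val2, val2] at hlt
  simp [XCE, h2] at hlt
  have c1 : ((z 1 : ℝ)) ≤ 4 := by exact_mod_cast h1
  linarith

lemma notMEA_C_YC : ¬ IsMEA vCE XCE 2 ![0, 1, 11] := by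
  rintro ⟨z, hz, hne, hlt, hmin⟩
  have h0 : z 0 = 0 := by simpa using hz 0
  have h1 : z 1 ≤ 1 := by simpa using hz 1
  have h2 : z 2 ≤ 11 := by simpa using hz 2
  rw [val2, val2] at hlt
  simp [XCE] at hlt
  rcases Nat.le_one_iff_eq_zero_or_eq_one.mp h1 with he1 | he1
  · rw [he1] at hlt
    have c2 : ((z 2 : ℝ)) ≤ 11 := by exact_mod_cast h2
    push_cast at hlt
    linarith
  · rw [he1] at hlt
    have hge : (10 : ℝ) ≤ (z 2 : ℝ) := by
      have : (9 : ℝ) < (z 2 : ℝ) := by linarith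
      exact_mod_cast (by exact_mod_cast this : 9 < z 2)
    have hz2 : z 2 = 10 := by
      have h10 : 10 ≤ z 2 := by exact_mod_cast hge
      rcases Nat.lt_or_ge (z 2) 11 with h | h
      · omega
      · exact absurd (funext fun b => by
          fin_cases b <;> simp [h0, he1] <;> omega) hne
    have hy := hmin 1 ![0, 1, 9] (by intro a; fin_cases a <;> simp [h0, he1, hz2])
      (by
        intro hcon
        have : (9 : ℕ) = z 2 := congrFun hcon 2
        omega)
    rw [val1, val1] at hy
    simp [XCE] at hy
    norm_num at hy

lemma bundleA : (fun b => XCE 0 b + if b = 1 then 1 else 0) = ![3, 6, 0] := by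
  funext b; fin_cases b <;> rfl
lemma bundleB : (fun b => XCE 1 b + if b = 1 then 1 else 0) = ![6, 4, 0] := by
  funext b; fin_cases b <;> rfl
lemma bundleC : (fun b => XCE 2 b + if b = 1 then 1 else 0) = ![0, 1, 11] := by
  funext b; fin_cases b <;> rfl

theorem stmt_14 :
    (∀ s : Fin 3, ¬ ∃ r : Fin 3, Relation.ReflTransGen (Envies vCE XCE) s r ∧
        IsMEA vCE XCE r (fun b => XCE s b + if b = 1 then 1 else 0)) ∧
    (∀ s : Fin 3, (∀ i : Fin 3, ¬ Envies vCE XCE i s) →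
      ¬ ∃ r : Fin 3, Relation.ReflTransGen (Envies vCE XCE) s r ∧
        IsMEA vCE XCE r (fun b => XCE s b + if b = 1 then 1 else 0)) := by
  have main : ∀ s : Fin 3, ¬ ∃ r : Fin 3, Relation.ReflTransGen (Envies vCE XCE) s r ∧
      IsMEA vCE XCE r (fun b => XCE s b + if b = 1 then 1 else 0) := by
    intro s
    have hs : s = 0 ∨ s = 1 ∨ s = 2 := by omega
    rcases hs with h | h | h <;> subst h
    · rintro ⟨r, hr, hm⟩
      rw [bundleA] at hm
      rw [reachA r hr] at hm
      exact notMEA_A hm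
    · rintro ⟨r, hr, hm⟩
      rw [bundleB] at hm
      rcases reachB r hr with h | h <;> rw [h] at hm
      · exact notMEA_B hm
      · exact notMEA_C_YB hm
    · rintro ⟨r, hr, hm⟩
      rw [bundleC] at hm
      rw [reachC r hr] at hm
      exact notMEA_C_YC hm
  exact ⟨main, fun s _ => main s⟩
end

section
/- Let t = 2 and partition the agents as N1 = {i : v i 1 > v i 2} and N2 = {i : v i 2 ≥ v i 1}. Let N1+ ⊆ N1 be any subset and p ≥ 0 an integer, and let X be the allocation with X i = (p+1, 0) for i ∈ N1+, X i = (p, 0) for i ∈ N1 \ N1+, and X i = (0, p) for i ∈ N2. Then X is EFX. -/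
/-! Each agent values its own bundle at least `p · max (v i 0) (v i 1)`, while every bundle with
one item removed lies below `(p, 0)` or `(0, p)` and so is worth at most that to every agent. -/

theorem isEFX_of_le_threshold {n t : ℕ} {v : Fin n → Fin t → ℝ} {X : Fin n → Fin t → ℕ}
    (c : Fin n → ℝ) (hown : ∀ i, c i ≤ value v i (X i))
    (hother : ∀ i j a, 1 ≤ X j a → value v i (X j) - v i a ≤ c i) :
    IsEFX v X :=
  fun i j _ a ha => (hother i j a ha).trans (hown i)

section TwoTypes

variable {n : ℕ} {v : Fin n → Fin 2 → ℝ} {i : Fin n}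

theorem value_vec_two (x₀ x₁ : ℕ) : value v i ![x₀, x₁] = v i 0 * x₀ + v i 1 * x₁ := by
  simp [value, Fin.sum_univ_two]

theorem value_sub_le_mul_max (h0 : 0 ≤ v i 0) (h1 : 0 ≤ v i 1) {p : ℕ} {x : Fin 2 → ℕ}
    (hx : x = ![p + 1, 0] ∨ x = ![p, 0] ∨ x = ![0, p]) {a : Fin 2} (ha : 1 ≤ x a) :
    value v i x - v i a ≤ p * max (v i 0) (v i 1) := by
  have hle0 : (p : ℝ) * v i 0 ≤ p * max (v i 0) (v i 1) := by gcongr; exact le_max_left _ _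
  have hle1 : (p : ℝ) * v i 1 ≤ p * max (v i 0) (v i 1) := by gcongr; exact le_max_right _ _
  rcases hx with rfl | rfl | rfl <;> fin_cases a <;>
    simp only [Fin.zero_eta, Fin.mk_one, Matrix.cons_val_zero, Matrix.cons_val_one,
      Matrix.cons_val_fin_one, value_vec_two, Nat.cast_add, Nat.cast_one, Nat.cast_zero] at ha ⊢ <;>
    first | omega | linarith

theorem mul_max_le_value {p : ℕ} {x : Fin 2 → ℕ}
    (hx : (v i 1 < v i 0 ∧ (x = ![p + 1, 0] ∨ x = ![p, 0])) ∨ (v i 0 ≤ v i 1 ∧ x = ![0, p]))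
    (h0 : 0 ≤ v i 0) :
    p * max (v i 0) (v i 1) ≤ value v i x := by
  rcases hx with ⟨hlt, rfl | rfl⟩ | ⟨hle, rfl⟩ <;> rw [value_vec_two]
  · rw [max_eq_left hlt.le]; push_cast; linarith
  · rw [max_eq_left hlt.le, Nat.cast_zero, mul_zero, add_zero, mul_comm]
  · rw [max_eq_right hle, Nat.cast_zero, mul_zero, zero_add, mul_comm]

end TwoTypes

theorem stmt_16_general (n : ℕ) (v : Fin n → Fin 2 → ℝ)
    (hnonneg : ∀ i a, 0 ≤ v i a)
    (N1p : Finset (Fin n)) (hN1p : ∀ i ∈ N1p, v i 0 > v i 1)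
    (p : ℕ) (X : Fin n → Fin 2 → ℕ)
    (hX1 : ∀ i ∈ N1p, X i = ![p + 1, 0])
    (hX2 : ∀ i ∉ N1p, v i 0 > v i 1 → X i = ![p, 0])
    (hX3 : ∀ i ∉ N1p, v i 1 ≥ v i 0 → X i = ![0, p]) :
    IsEFX v X := by
  have hshape : ∀ k, (v k 1 < v k 0 ∧ (X k = ![p + 1, 0] ∨ X k = ![p, 0])) ∨
      (v k 0 ≤ v k 1 ∧ X k = ![0, p]) := by
    intro k
    by_cases hk : k ∈ N1p
    · exact .inl ⟨hN1p k hk, .inl (hX1 k hk)⟩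
    rcases lt_or_ge (v k 1) (v k 0) with h | h
    · exact .inl ⟨h, .inr (hX2 k hk h)⟩
    · exact .inr ⟨h, hX3 k hk h⟩
  have hbundle : ∀ k, X k = ![p + 1, 0] ∨ X k = ![p, 0] ∨ X k = ![0, p] := by
    intro k
    rcases hshape k with ⟨_, h | h⟩ | ⟨_, h⟩
    exacts [.inl h, .inr (.inl h), .inr (.inr h)]
  refine isEFX_of_le_threshold (fun i => p * max (v i 0) (v i 1))
    (fun i => mul_max_le_value (hshape i) (hnonneg i 0)) ?_
  intro i j a ha
  exact value_sub_le_mul_max (hnonneg i 0) (hnonneg i 1) (hbundle j) ha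

theorem stmt_16 (n : ℕ) (v : Fin n → Fin 2 → ℝ)
    (hnonneg : ∀ i a, 0 ≤ v i a) (hpos : ∀ i, ∃ a, 0 < v i a)
    (N1p : Finset (Fin n)) (hN1p : ∀ i ∈ N1p, v i 0 > v i 1)
    (p : ℕ) (X : Fin n → Fin 2 → ℕ)
    (hX1 : ∀ i ∈ N1p, X i = ![p + 1, 0])
    (hX2 : ∀ i ∉ N1p, v i 0 > v i 1 → X i = ![p, 0])
    (hX3 : ∀ i ∉ N1p, v i 1 ≥ v i 0 → X i = ![0, p]) :
    IsEFX v X :=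
  stmt_16_general n v hnonneg N1p hN1p p X hX1 hX2 hX3
end
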